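/- arXiv:2406.01583 — 3 statements merged into one kernel-verified Lean document; each statement's English description precedes it below -/
import Mathlib

section
/- Let f : E → F be a linear map between real inner product spaces with E nontrivial, such that for all u, v ∈ E, ‖u‖ ≤ ‖v‖ implies ‖f u‖ ≤ ‖f v‖. Then there exists a constant k ≥ 0 such that ⟪f u, f v⟫ = k ⟪u, v⟫ for all u, v ∈ E. -/
open RealInnerProductSpace

namespace LinearMap

variable {E F : Type*}

theorem exists_norm_map_eq_mul_norm [NormedAddCommGroup E] [NormedSpace ℝ E]
    [SeminormedAddCommGroup F] [NormedSpace ℝ F] (f : E →ₗ[ℝ] F)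
    (hf : ∀ u v : E, ‖u‖ = ‖v‖ → ‖f u‖ = ‖f v‖) :
    ∃ c : ℝ, ∀ u : E, ‖f u‖ = c * ‖u‖ := by
  rcases subsingleton_or_nontrivial E with hE | hE
  · exact ⟨0, fun u => by simp [Subsingleton.elim u 0]⟩
  obtain ⟨e, he⟩ := exists_norm_eq E zero_le_one
  refine ⟨‖f e‖, fun u => ?_⟩
  have hu : ‖u‖ = ‖‖u‖ • e‖ := by rw [norm_smul, norm_norm, he, mul_one]
  rw [hf _ _ hu, map_smul, norm_smul, norm_norm, mul_comm]

theorem inner_map_map_of_norm_map_eq_mul_norm [NormedAddCommGroup E] [InnerProductSpace ℝ E]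
    [NormedAddCommGroup F] [InnerProductSpace ℝ F] (f : E →ₗ[ℝ] F) {c : ℝ}
    (hf : ∀ u : E, ‖f u‖ = c * ‖u‖) (u v : E) :
    ⟪f u, f v⟫ = c ^ 2 * ⟪u, v⟫ := by
  rw [real_inner_eq_norm_add_mul_self_sub_norm_mul_self_sub_norm_mul_self_div_two,
    real_inner_eq_norm_add_mul_self_sub_norm_mul_self_sub_norm_mul_self_div_two u v,
    ← map_add, hf (u + v), hf u, hf v]
  ring

end LinearMap

theorem stmt_5_general {E F : Type*} [NormedAddCommGroup E] [InnerProductSpace ℝ E]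
    [NormedAddCommGroup F] [InnerProductSpace ℝ F]
    (f : E →ₗ[ℝ] F)
    (hf : ∀ u v : E, ‖u‖ ≤ ‖v‖ → ‖f u‖ ≤ ‖f v‖) :
    ∃ k : ℝ, 0 ≤ k ∧ ∀ u v : E, ⟪f u, f v⟫ = k * ⟪u, v⟫ := by
  obtain ⟨c, hc⟩ := f.exists_norm_map_eq_mul_norm fun u v huv =>
    le_antisymm (hf u v huv.le) (hf v u huv.ge)
  exact ⟨c ^ 2, sq_nonneg c, f.inner_map_map_of_norm_map_eq_mul_norm hc⟩

theorem stmt_5 {E F : Type*} [NormedAddCommGroup E] [InnerProductSpace ℝ E]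
    [Nontrivial E] [NormedAddCommGroup F] [InnerProductSpace ℝ F]
    (f : E →ₗ[ℝ] F)
    (hf : ∀ u v : E, ‖u‖ ≤ ‖v‖ → ‖f u‖ ≤ ‖f v‖) :
    ∃ k : ℝ, 0 ≤ k ∧ ∀ u v : E, ⟪f u, f v⟫ = k * ⟪u, v⟫ :=
  stmt_5_general f hf
end

section
/- Let f₁, ..., f_N : E → F be linear maps between real inner product spaces such that (i) each fᵢ satisfies: ‖u‖ ≤ ‖v‖ implies ‖fᵢ u‖ ≤ ‖fᵢ v‖, and (ii) for all i, j and all u, v: ‖u‖ ≤ ‖v‖ implies ‖fᵢ u‖ ≤ ‖f_j v‖. Then there exists a single constant c ≥ 0 such that ‖fᵢ u‖ = c · ‖u‖ for all i and all u ∈ E. -/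
/-!
A linear map that is monotone with respect to norms sends the vectors `‖v‖ • u` and `‖u‖ • v`,
which have the same norm, to vectors of the same norm; hence `‖f u‖ * ‖v‖ = ‖f v‖ * ‖u‖`, so `f`
scales norms by a constant. Applying the inter-component condition to `u` and `u` in both orders
shows that all the maps have the same norm at every vector, hence the same constant.
-/

namespace LinearMap

variable {E F : Type*} [SeminormedAddCommGroup E] [NormedSpace ℝ E]
  [SeminormedAddCommGroup F] [NormedSpace ℝ F] {f : E →ₗ[ℝ] F}

theorem norm_apply_mul_norm_eq_of_norm_mono (hf : ∀ u v : E, ‖u‖ ≤ ‖v‖ → ‖f u‖ ≤ ‖f v‖)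
    (u v : E) : ‖f u‖ * ‖v‖ = ‖f v‖ * ‖u‖ := by
  have hnorm : ‖‖v‖ • u‖ = ‖‖u‖ • v‖ := by simp only [norm_smul, norm_norm, mul_comm]
  have hmap : ‖f (‖v‖ • u)‖ = ‖f (‖u‖ • v)‖ :=
    le_antisymm (hf _ _ hnorm.le) (hf _ _ hnorm.ge)
  simpa only [map_smul, norm_smul, norm_norm, mul_comm] using hmap

theorem exists_norm_apply_eq_mul_norm_of_norm_mono
    (hf : ∀ u v : E, ‖u‖ ≤ ‖v‖ → ‖f u‖ ≤ ‖f v‖) :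
    ∃ c : ℝ, 0 ≤ c ∧ ∀ u : E, ‖f u‖ = c * ‖u‖ := by
  by_cases hE : ∃ x : E, ‖x‖ ≠ 0
  · obtain ⟨x, hx⟩ := hE
    refine ⟨‖f x‖ / ‖x‖, by positivity, fun u => ?_⟩
    rw [div_mul_eq_mul_div, eq_div_iff hx, norm_apply_mul_norm_eq_of_norm_mono hf]
  · push Not at hE
    refine ⟨0, le_rfl, fun u => ?_⟩
    have hfu : ‖f u‖ ≤ ‖f 0‖ := hf u 0 (by rw [hE u, norm_zero])
    rw [zero_mul]
    exact le_antisymm (by simpa using hfu) (norm_nonneg _)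

end LinearMap

theorem stmt_6_general {E F : Type*} [NormedAddCommGroup E] [InnerProductSpace ℝ E]
    [NormedAddCommGroup F] [InnerProductSpace ℝ F]
    (N : ℕ) (f : Fin N → (E →ₗ[ℝ] F))
    (hinter : ∀ i j, ∀ u v : E, ‖u‖ ≤ ‖v‖ → ‖f i u‖ ≤ ‖f j v‖) :
    ∃ c : ℝ, 0 ≤ c ∧ ∀ i, ∀ u : E, ‖f i u‖ = c * ‖u‖ := by
  rcases isEmpty_or_nonempty (Fin N) with hN | ⟨⟨i₀⟩⟩
  · exact ⟨0, le_rfl, fun i => isEmptyElim i⟩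
  obtain ⟨c, hc, hi₀⟩ := (f i₀).exists_norm_apply_eq_mul_norm_of_norm_mono (hinter i₀ i₀)
  refine ⟨c, hc, fun i u => ?_⟩
  rw [← hi₀ u]
  exact le_antisymm (hinter i i₀ u u le_rfl) (hinter i₀ i u u le_rfl)

theorem stmt_6 {E F : Type*} [NormedAddCommGroup E] [InnerProductSpace ℝ E]
    [Nontrivial E] [NormedAddCommGroup F] [InnerProductSpace ℝ F]
    (N : ℕ) (f : Fin N → (E →ₗ[ℝ] F))
    (hintra : ∀ i, ∀ u v : E, ‖u‖ ≤ ‖v‖ → ‖f i u‖ ≤ ‖f i v‖)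
    (hinter : ∀ i j, ∀ u v : E, ‖u‖ ≤ ‖v‖ → ‖f i u‖ ≤ ‖f j v‖) :
    ∃ c : ℝ, 0 ≤ c ∧ ∀ i, ∀ u : E, ‖f i u‖ = c * ‖u‖ :=
  stmt_6_general N f hinter
end

section
/- Let f : E → F be a nonzero linear map between real inner product spaces such that ‖u‖ ≤ ‖v‖ implies ‖f u‖ ≤ ‖f v‖. Then f is injective. -/
/-!
If `f x = 0` with `x ≠ 0`, monotonicity forces `f` to vanish on the closed ball of radius
`‖x‖`. A subspace with nonempty interior is the whole space, so `f = 0`.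
-/

theorem LinearMap.eq_zero_of_closedBall_subset_ker {𝕜 E F : Type*} [NontriviallyNormedField 𝕜]
    [SeminormedAddCommGroup E] [NormedSpace 𝕜 E] [AddCommGroup F] [Module 𝕜 F]
    (f : E →ₗ[𝕜] F) {r : ℝ} (hr : 0 < r)
    (h : Metric.closedBall (0 : E) r ⊆ LinearMap.ker f) : f = 0 :=
  LinearMap.ker_eq_top.mp <| (LinearMap.ker f).eq_top_of_nonempty_interior'
    ⟨0, mem_interior_iff_mem_nhds.mpr <|
      Filter.mem_of_superset (Metric.closedBall_mem_nhds 0 hr) h⟩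

theorem stmt_15 {E F : Type*} [NormedAddCommGroup E] [InnerProductSpace ℝ E]
    [NormedAddCommGroup F] [InnerProductSpace ℝ F]
    (f : E →ₗ[ℝ] F) (hf0 : f ≠ 0)
    (hf : ∀ u v : E, ‖u‖ ≤ ‖v‖ → ‖f u‖ ≤ ‖f v‖) :
    Function.Injective f := by
  refine (injective_iff_map_eq_zero f).mpr fun x hx => by_contra fun hx0 => hf0 ?_
  refine f.eq_zero_of_closedBall_subset_ker (norm_pos_iff.mpr hx0) fun v hv => ?_
  have hfv : ‖f v‖ ≤ ‖f x‖ := hf v x (by simpa using hv)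
  simpa [hx] using hfv
end
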